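/- Hard look-ahead strengthening is not monotone: there exist syntactic protocols Q ⊆ P and an initial gossip graph G with Q^■(G) ⊄ P^■(G). Concretely, let G be the 'spaceship' graph on agents {0,1,2,3} with N the reflexive closure of {(0,1),(3,1),(1,2)} and S the identity, let P = LNS and Q = LNS^♦ (the soft look-ahead strengthening of LNS). Then Q ⊆ P, yet (LNS^♦)^■(G) = LNS^♦(G) (since LNS^♦ is strongly successful on G, hard look-ahead strengthening does not change it) whereas LNS^■(G) contains no sequence of length greater than 1; in particular the sequence 01;31;12;02;32 belongs to (LNS^♦)^■(G) but not to LNS^■(G), so (LNS^♦)^■(G) ⊄ LNS^■(G). -/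

import Mathlib

set_option maxHeartbeats 1000000

structure GossipGraph (A : Type) : Type where
  N : A → A → Prop
  S : A → A → Prop
  refl_S : ∀ a, S a a
  S_sub_N : ∀ a b, S a b → N a b

namespace Gossip

variable {A : Type}

def Initial (G : GossipGraph A) : Prop := ∀ a b, G.S a b ↔ a = b

def doCall (G : GossipGraph A) (c : A × A) : GossipGraph A where
  N x y := G.N x y ∨ ((x = c.1 ∨ x = c.2) ∧ (G.N c.1 y ∨ G.N c.2 y))
  S x y := G.S x y ∨ ((x = c.1 ∨ x = c.2) ∧ (G.S c.1 y ∨ G.S c.2 y))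
  refl_S a := Or.inl (G.refl_S a)
  S_sub_N a b h := by
    rcases h with h | ⟨h1, h2 | h2⟩
    · exact Or.inl (G.S_sub_N a b h)
    · exact Or.inr ⟨h1, Or.inl (G.S_sub_N _ _ h2)⟩
    · exact Or.inr ⟨h1, Or.inr (G.S_sub_N _ _ h2)⟩

def doCalls (G : GossipGraph A) (σ : List (A × A)) : GossipGraph A :=
  σ.foldl doCall G

def PossibleSeq (G : GossipGraph A) : List (A × A) → Prop
  | [] => True
  | c :: σ => c.1 ≠ c.2 ∧ G.N c.1 c.2 ∧ PossibleSeq (doCall G c) σ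

mutual
  inductive Form (A : Type) : Type where
    | top : Form A
    | atomN : A → A → Form A
    | atomS : A → A → Form A
    | neg : Form A → Form A
    | conj : Form A → Form A → Form A
    | K : A → (A → A → Form A) → Form A → Form A
    | box : Prog A → Form A → Form A
  inductive Prog (A : Type) : Type where
    | test : Form A → Prog A
    | call : A → A → Prog A
    | seq : Prog A → Prog A → Prog A
    | cup : Prog A → Prog A → Prog A
    | star : Prog A → Prog A
end

abbrev Protocol (A : Type) := A → A → Form A

inductive Epi (G : GossipGraph A) (perm : List (A × A) → (A × A) → Prop) (a : A) :
    List (A × A) → List (A × A) → Prop where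
  | refl : Epi G perm a [] []
  | call_out {σ τ : List (A × A)} {b : A} :
      Epi G perm a σ τ →
      (∀ x, (doCalls G σ).N b x ↔ (doCalls G τ).N b x) →
      (∀ x, (doCalls G σ).S b x ↔ (doCalls G τ).S b x) →
      perm σ (a, b) → perm τ (a, b) →
      Epi G perm a (σ ++ [(a, b)]) (τ ++ [(a, b)])
  | call_in {σ τ : List (A × A)} {b : A} :
      Epi G perm a σ τ →
      (∀ x, (doCalls G σ).N b x ↔ (doCalls G τ).N b x) →
      (∀ x, (doCalls G σ).S b x ↔ (doCalls G τ).S b x) →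
      perm σ (b, a) → perm τ (b, a) →
      Epi G perm a (σ ++ [(b, a)]) (τ ++ [(b, a)])
  | other {σ τ : List (A × A)} {c d e f : A} :
      Epi G perm a σ τ →
      c ≠ a → d ≠ a → e ≠ a → f ≠ a →
      perm σ (c, d) → perm τ (e, f) →
      Epi G perm a (σ ++ [(c, d)]) (τ ++ [(e, f)])

mutual
  def Sat (G : GossipGraph A) : List (A × A) → Form A → Prop
    | _, Form.top => True
    | σ, Form.atomN a b => (doCalls G σ).N a b
    | σ, Form.atomS a b => (doCalls G σ).S a b
    | σ, Form.neg φ => ¬ Sat G σ φ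
    | σ, Form.conj φ ψ => Sat G σ φ ∧ Sat G σ ψ
    | σ, Form.K a P φ =>
        ∀ τ, Epi G (fun ρ c => c.1 ≠ c.2 ∧ (doCalls G ρ).N c.1 c.2 ∧ Sat G ρ (P c.1 c.2)) a τ σ →
          Sat G τ φ
    | σ, Form.box π φ => ∀ τ, ProgRel G π σ τ → Sat G τ φ
  def ProgRel (G : GossipGraph A) : Prog A → List (A × A) → List (A × A) → Prop
    | Prog.test φ, σ, τ => σ = τ ∧ Sat G σ φ
    | Prog.call a b, σ, τ => a ≠ b ∧ (doCalls G σ).N a b ∧ τ = σ ++ [(a, b)]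
    | Prog.seq π π', σ, τ => ∃ ρ, ProgRel G π σ ρ ∧ ProgRel G π' ρ τ
    | Prog.cup π π', σ, τ => ProgRel G π σ τ ∨ ProgRel G π' σ τ
    | Prog.star π, σ, τ => Relation.ReflTransGen (fun x y => ProgRel G π x y) σ τ
end

/-- A call `ab` is `P`-permitted at `(G, σ)` iff `a ≠ b`, `N^σ a b` and `G,σ ⊨ P_{ab}`. -/
def Permits (G : GossipGraph A) (P : Protocol A) (σ : List (A × A)) (c : A × A) : Prop :=
  c.1 ≠ c.2 ∧ (doCalls G σ).N c.1 c.2 ∧ Sat G σ (P c.1 c.2)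

/-- The least set of call sequences containing `ε` and closed under adding permitted calls. -/
inductive Ext (G : GossipGraph A) (perm : List (A × A) → (A × A) → Prop) : List (A × A) → Prop where
  | nil : Ext G perm []
  | snoc {σ : List (A × A)} {c : A × A} : Ext G perm σ → perm σ c → Ext G perm (σ ++ [c])

/-- The extension of a syntactic protocol `P` on an (initial) gossip graph `G`. -/
def extension (P : Protocol A) (G : GossipGraph A) : Set (List (A × A)) :=
  { σ | Ext G (Permits G P) σ }

/-- A formula is valid iff it is true at every gossip state, i.e. at every pair of an
initial gossip graph and a call sequence possible on it. -/
def Valid (φ : Form A) : Prop :=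
  ∀ G : GossipGraph A, Initial G → ∀ σ : List (A × A), PossibleSeq G σ → Sat G σ φ

def impF (φ ψ : Form A) : Form A := Form.neg (Form.conj φ (Form.neg ψ))
def orF (φ ψ : Form A) : Form A := Form.neg (Form.conj (Form.neg φ) (Form.neg ψ))
def iffF (φ ψ : Form A) : Form A := Form.conj (impF φ ψ) (impF ψ φ)
/-- The epistemic "possibility" dual `K̂ := ¬K¬`. -/
def hatK (a : A) (P : Protocol A) (φ : Form A) : Form A := Form.neg (Form.K a P (Form.neg φ))

/-- A semantic protocol, as raw data: a map from (initial) gossip graphs to sets of call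
sequences. -/
abbrev RawSem (A : Type) := GossipGraph A → Set (List (A × A))

/-- For a semantic protocol, a call `c` is permitted at `(G,σ)` iff `σ;c ∈ P(G)`. -/
def semPerm (Q : RawSem A) (G : GossipGraph A) (σ : List (A × A)) (c : A × A) : Prop :=
  σ ++ [c] ∈ Q G

/-- `σ` is terminal (in `Q(G)`) iff no further call is permitted. -/
def TerminalIn (Q : RawSem A) (G : GossipGraph A) (σ : List (A × A)) : Prop :=
  ∀ c : A × A, σ ++ [c] ∉ Q G

/-- All agents are experts: everyone knows all secrets. -/
def AllExpert (G : GossipGraph A) : Prop := ∀ a b : A, G.S a b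

/-- A semantic protocol: assigns to each initial gossip graph a set of call sequences
possible on it, containing the empty sequence and closed under prefixes. -/
structure SemProtocol (A : Type) : Type where
  ext : GossipGraph A → Set (List (A × A))
  nil_mem : ∀ G : GossipGraph A, Initial G → [] ∈ ext G
  prefix_closed : ∀ G : GossipGraph A, Initial G → ∀ σ c, σ ++ [c] ∈ ext G → σ ∈ ext G
  possible : ∀ G : GossipGraph A, Initial G → ∀ σ ∈ ext G, PossibleSeq G σ

/-- A semantic protocol is epistemic iff a call `ab` is permitted at `(G,σ)` exactly when it
is permitted at all states that agent `a` cannot distinguish from `(G,σ)`. -/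
def SemEpistemic (Q : RawSem A) : Prop :=
  ∀ G : GossipGraph A, Initial G → ∀ σ ∈ Q G, ∀ a b : A, a ≠ b →
    (σ ++ [(a, b)] ∈ Q G ↔ ∀ τ, Epi G (semPerm Q G) a τ σ → τ ++ [(a, b)] ∈ Q G)

/-- Relabelling the agents of a gossip graph along a permutation. -/
def mapGraph (J : Equiv.Perm A) (G : GossipGraph A) : GossipGraph A where
  N x y := G.N (J.symm x) (J.symm y)
  S x y := G.S (J.symm x) (J.symm y)
  refl_S a := G.refl_S _
  S_sub_N a b h := G.S_sub_N _ _ h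

/-- Relabelling a call sequence, callwise. -/
def mapSeq (J : Equiv.Perm A) (σ : List (A × A)) : List (A × A) :=
  σ.map (fun c => (J c.1, J c.2))

mutual
  /-- Relabelling the agents in a formula along a permutation. -/
  def mapForm (J : Equiv.Perm A) : Form A → Form A
    | Form.top => Form.top
    | Form.atomN a b => Form.atomN (J a) (J b)
    | Form.atomS a b => Form.atomS (J a) (J b)
    | Form.neg φ => Form.neg (mapForm J φ)
    | Form.conj φ ψ => Form.conj (mapForm J φ) (mapForm J ψ)
    | Form.K a P φ => Form.K (J a) (fun x y => mapForm J (P (J.symm x) (J.symm y))) (mapForm J φ)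
    | Form.box π φ => Form.box (mapProg J π) (mapForm J φ)
  /-- Relabelling the agents in a program along a permutation. -/
  def mapProg (J : Equiv.Perm A) : Prog A → Prog A
    | Prog.test φ => Prog.test (mapForm J φ)
    | Prog.call a b => Prog.call (J a) (J b)
    | Prog.seq π π' => Prog.seq (mapProg J π) (mapProg J π')
    | Prog.cup π π' => Prog.cup (mapProg J π) (mapProg J π')
    | Prog.star π => Prog.star (mapProg J π)
end

/-- A semantic protocol is symmetric iff it commutes with relabelling of the agents. -/
def SemSymmetric (Q : RawSem A) : Prop :=
  ∀ (J : Equiv.Perm A) (G : GossipGraph A), Initial G →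
    Q (mapGraph J G) = mapSeq J '' Q G

def listConj (l : List (Form A)) : Form A := l.foldr Form.conj Form.top
def listDisj (l : List (Form A)) : Form A := l.foldr orF (Form.neg Form.top)

noncomputable def pairsList (A : Type) [Fintype A] : List (A × A) := (Finset.univ : Finset (A × A)).toList
noncomputable def distinctPairs (A : Type) [Fintype A] [DecidableEq A] : List (A × A) :=
  (pairsList A).filter (fun c => decide (c.1 ≠ c.2))

/-- The formula `Ex`: all agents are experts. -/
noncomputable def ExForm (A : Type) [Fintype A] : Form A :=
  listConj ((pairsList A).map (fun c => Form.atomS c.1 c.2))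

/-- `Ex ∨ ⋁_{i≠j} (N_ij ∧ P_ij)`. -/
noncomputable def oneStepBody (A : Type) [Fintype A] [DecidableEq A] (P : Protocol A) : Form A :=
  orF (ExForm A) (listDisj ((distinctPairs A).map (fun c => Form.conj (Form.atomN c.1 c.2) (P c.1 c.2))))

/-- Hard one-step strengthening: `P_ab ∧ K_a^P [ab](Ex ∨ ⋁_{i≠j}(N_ij ∧ P_ij))`. -/
noncomputable def hardOneStep {A : Type} [Fintype A] [DecidableEq A] (P : Protocol A) : Protocol A :=
  fun a b => Form.conj (P a b) (Form.K a P (Form.box (Prog.call a b) (oneStepBody A P)))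

/-- Soft one-step strengthening: `P_ab ∧ K̂_a^P [ab](Ex ∨ ⋁_{i≠j}(N_ij ∧ P_ij))`. -/
noncomputable def softOneStep {A : Type} [Fintype A] [DecidableEq A] (P : Protocol A) : Protocol A :=
  fun a b => Form.conj (P a b) (hatK a P (Form.box (Prog.call a b) (oneStepBody A P)))

/-- The protocol `P` as a program:
`(⋃_{a≠b} ?(N_ab ∧ P_ab);ab)* ; ?⋀_{a≠b} ¬(N_ab ∧ P_ab)`. -/
noncomputable def protProg (A : Type) [Fintype A] [DecidableEq A] (P : Protocol A) : Prog A :=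
  Prog.seq
    (Prog.star (((distinctPairs A).map (fun c =>
      Prog.seq (Prog.test (Form.conj (Form.atomN c.1 c.2) (P c.1 c.2))) (Prog.call c.1 c.2))).foldr
        Prog.cup (Prog.test (Form.neg Form.top))))
    (Prog.test (listConj ((distinctPairs A).map (fun c =>
      Form.neg (Form.conj (Form.atomN c.1 c.2) (P c.1 c.2))))))

/-- Hard look-ahead strengthening: `P_ab ∧ K_a^P [ab]⟨P⟩Ex`. -/
noncomputable def hardLookAhead {A : Type} [Fintype A] [DecidableEq A] (P : Protocol A) : Protocol A :=
  fun a b => Form.conj (P a b)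
    (Form.K a P (Form.box (Prog.call a b)
      (Form.neg (Form.box (protProg A P) (Form.neg (ExForm A))))))

/-- Soft look-ahead strengthening: `P_ab ∧ K̂_a^P [ab]⟨P⟩Ex`. -/
noncomputable def softLookAhead {A : Type} [Fintype A] [DecidableEq A] (P : Protocol A) : Protocol A :=
  fun a b => Form.conj (P a b)
    (hatK a P (Form.box (Prog.call a b)
      (Form.neg (Form.box (protProg A P) (Form.neg (ExForm A))))))

/-- Hard uniform backward defoliation of a semantic protocol. -/
def HUBD (Q : RawSem A) : RawSem A := fun G =>
  { σ | σ ∈ Q G ∧ (σ = [] ∨ ∃ τ : List (A × A), ∃ a b : A, σ = τ ++ [(a, b)] ∧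
      ∀ τ', Epi G (semPerm Q G) a τ' τ →
        (τ' ++ [(a, b)] ∈ Q G ∧ TerminalIn Q G (τ' ++ [(a, b)])) →
          AllExpert (doCalls G (τ' ++ [(a, b)]))) }

/-- Soft uniform backward defoliation of a semantic protocol. -/
def SUBD (Q : RawSem A) : RawSem A := fun G =>
  { σ | σ ∈ Q G ∧ (σ = [] ∨ ∃ τ : List (A × A), ∃ a b : A, σ = τ ++ [(a, b)] ∧
      ∃ τ', Epi G (semPerm Q G) a τ' τ ∧
        ((τ' ++ [(a, b)] ∈ Q G ∧ TerminalIn Q G (τ' ++ [(a, b)])) →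
          AllExpert (doCalls G (τ' ++ [(a, b)])))) }

/-- The syntactic protocol LNS: `LNS_ab := ¬ S_ab`. -/
def LNSsyn (A : Type) : Protocol A := fun a b => Form.neg (Form.atomS a b)

/-- LNS-permitted: call `ab` permitted at `(G,σ)` iff `N^σ a b` and not `S^σ a b`. -/
def LNSperm (G : GossipGraph A) (σ : List (A × A)) (c : A × A) : Prop :=
  c.1 ≠ c.2 ∧ (doCalls G σ).N c.1 c.2 ∧ ¬ (doCalls G σ).S c.1 c.2

/-- LNS as a semantic protocol. -/
def LNSsem : RawSem A := fun G => { σ | Ext G (LNSperm G) σ }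

/-- A semantic protocol is strongly successful on `G` iff every terminal sequence makes
all agents experts. -/
def StronglySuccessfulOn (Q : RawSem A) (G : GossipGraph A) : Prop :=
  ∀ σ ∈ Q G, TerminalIn Q G σ → AllExpert (doCalls G σ)

/-- A semantic protocol is weakly successful on `G` iff some terminal sequence makes
all agents experts. -/
def WeaklySuccessfulOn (Q : RawSem A) (G : GossipGraph A) : Prop :=
  ∃ σ ∈ Q G, TerminalIn Q G σ ∧ AllExpert (doCalls G σ)

/-- The "spaceship" initial gossip graph on agents 0,1,2,3:
`N` is the reflexive closure of {(0,1),(3,1),(1,2)} and `S` is the identity. -/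
def spaceship : GossipGraph (Fin 4) where
  N x y := x = y ∨ (x = 0 ∧ y = 1) ∨ (x = 3 ∧ y = 1) ∨ (x = 1 ∧ y = 2)
  S x y := x = y
  refl_S a := rfl
  S_sub_N a b h := Or.inl h

/-!
Everything reduces to finite computation on the spaceship graph. Under LNS and its
strengthenings every permitted call teaches the caller a new secret, so the number of unknown
pairs strictly decreases along a run and `⟨P⟩Ex` is decided by a search of bounded depth.
The classes of `∼_a^P` are computed call by call, following the three constructors of `Epi`.
This turns permission under `LNS`, `LNS^♦`, `LNS^■` and `(LNS^♦)^■` into Boolean functions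
of the call sequence, and the extensions can be enumerated layer by layer: `LNS^■` stops after
one call, while `LNS^♦` stops after at most five, is successful at every terminal sequence, and
wherever it permits a call so does `(LNS^♦)^■`.
-/

theorem doCalls_append_singleton (G : GossipGraph A) (σ : List (A × A)) (c : A × A) :
    doCalls G (σ ++ [c]) = doCall (doCalls G σ) c := by
  simp [doCalls, List.foldl_append]

theorem extension_mono {G : GossipGraph A} {P Q : Protocol A}
    (h : ∀ σ c, Permits G Q σ c → Permits G P σ c) : extension Q G ⊆ extension P G := by
  intro σ hσ
  induction hσ with
  | nil => exact Ext.nil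
  | snoc _ hc ih => exact Ext.snoc ih (h _ _ hc)

theorem extension_eq_of_permits {G : GossipGraph A} {P Q : Protocol A}
    (hQP : ∀ σ c, Permits G Q σ c → Permits G P σ c)
    (hPQ : ∀ σ ∈ extension P G, ∀ c, Permits G P σ c → Permits G Q σ c) :
    extension Q G = extension P G := by
  refine (extension_mono hQP).antisymm fun σ hσ => ?_
  induction hσ with
  | nil => exact Ext.nil
  | snoc hσ hc ih => exact Ext.snoc ih (hPQ _ hσ _ hc)

theorem not_permits_of_terminalIn {G : GossipGraph A} {P : Protocol A} {σ : List (A × A)}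
    (hσ : σ ∈ extension P G) (hterm : TerminalIn (extension P) G σ) (c : A × A) :
    ¬ Permits G P σ c :=
  fun hc => hterm c (Ext.snoc hσ hc)

theorem ext_append_singleton_iff {G : GossipGraph A} {perm : List (A × A) → A × A → Prop}
    {σ : List (A × A)} {c : A × A} : Ext G perm (σ ++ [c]) ↔ Ext G perm σ ∧ perm σ c := by
  refine ⟨fun h => ?_, fun h => Ext.snoc h.1 h.2⟩
  generalize hσ : σ ++ [c] = σ' at h
  cases h with
  | nil => simp at hσ
  | snoc h hc =>
      obtain ⟨rfl, rfl⟩ := List.append_inj' hσ rfl |>.imp_right List.singleton_inj.1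
      exact ⟨h, hc⟩

theorem Permits.not_knows_of_LNS {G : GossipGraph A} {σ : List (A × A)} {c : A × A}
    (h : Permits G (LNSsyn A) σ c) : ¬ (doCalls G σ).S c.1 c.2 :=
  h.2.2

def SameLocalState (G : GossipGraph A) (σ τ : List (A × A)) (b : A) : Prop :=
  (∀ x, (doCalls G σ).N b x ↔ (doCalls G τ).N b x) ∧
  (∀ x, (doCalls G σ).S b x ↔ (doCalls G τ).S b x)

section Epi

variable {G : GossipGraph A} {perm : List (A × A) → A × A → Prop} {a : A}

theorem epi_nil_iff {τ : List (A × A)} : Epi G perm a τ [] ↔ τ = [] := by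
  refine ⟨fun h => ?_, by rintro rfl; exact Epi.refl⟩
  generalize hσ : ([] : List (A × A)) = σ at h
  cases h <;> simp_all

theorem epi_append_singleton_iff {ρ σ : List (A × A)} {c : A × A} :
    Epi G perm a ρ (σ ++ [c]) ↔
      ∃ τ d, ρ = τ ++ [d] ∧ Epi G perm a τ σ ∧
        ((c.1 = a ∧ d = c ∧ SameLocalState G τ σ c.2 ∧ perm τ c ∧ perm σ c) ∨
         (c.2 = a ∧ d = c ∧ SameLocalState G τ σ c.1 ∧ perm τ c ∧ perm σ c) ∨
         (c.1 ≠ a ∧ c.2 ≠ a ∧ d.1 ≠ a ∧ d.2 ≠ a ∧ perm τ d ∧ perm σ c)) := by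
  constructor
  · intro h
    generalize hσ : σ ++ [c] = σ' at h
    cases h with
    | refl => simp at hσ
    | @call_out σ₀ τ₀ b h1 h2 h3 h4 h5 =>
        obtain ⟨rfl, rfl⟩ := List.append_inj' hσ rfl |>.imp_right List.singleton_inj.1
        exact ⟨σ₀, (a, b), rfl, h1, Or.inl ⟨rfl, rfl, ⟨h2, h3⟩, h4, h5⟩⟩
    | @call_in σ₀ τ₀ b h1 h2 h3 h4 h5 =>
        obtain ⟨rfl, rfl⟩ := List.append_inj' hσ rfl |>.imp_right List.singleton_inj.1
        exact ⟨σ₀, (b, a), rfl, h1, Or.inr (Or.inl ⟨rfl, rfl, ⟨h2, h3⟩, h4, h5⟩)⟩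
    | @other σ₀ τ₀ c' d' e' f' h1 hc hd he hf h5 h6 =>
        obtain ⟨rfl, rfl⟩ := List.append_inj' hσ rfl |>.imp_right List.singleton_inj.1
        exact ⟨σ₀, (c', d'), rfl, h1, Or.inr (Or.inr ⟨he, hf, hc, hd, h5, h6⟩)⟩
  · rintro ⟨τ, ⟨x, y⟩, rfl, hepi, (⟨rfl, rfl, hsame, hτ, hσ⟩ | ⟨rfl, rfl, hsame, hτ, hσ⟩ |
      ⟨h1, h2, h3, h4, hτ, hσ⟩)⟩
    · exact Epi.call_out hepi hsame.1 hsame.2 hτ hσ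
    · exact Epi.call_in hepi hsame.1 hsame.2 hτ hσ
    · exact Epi.other hepi h3 h4 h1 h2 hτ hσ

end Epi

section Semantics

variable {G : GossipGraph A} {σ : List (A × A)}

theorem sat_listConj {l : List (Form A)} : Sat G σ (listConj l) ↔ ∀ φ ∈ l, Sat G σ φ := by
  induction l with
  | nil => simp [listConj, Sat]
  | cons φ l ih => simp [listConj, Sat] at ih ⊢; exact fun _ => ih

theorem sat_K_iff {a : A} {P : Protocol A} {φ : Form A} :
    Sat G σ (Form.K a P φ) ↔ ∀ τ, Epi G (Permits G P) a τ σ → Sat G τ φ := by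
  rw [Sat]; rfl

theorem sat_hatK_iff {a : A} {P : Protocol A} {φ : Form A} :
    Sat G σ (hatK a P φ) ↔ ∃ τ, Epi G (Permits G P) a τ σ ∧ Sat G τ φ := by
  simp only [hatK, Sat, not_forall, not_not, exists_prop]; rfl

theorem sat_box_call_iff {a b : A} {φ : Form A} :
    Sat G σ (Form.box (Prog.call a b) φ) ↔
      (a ≠ b → (doCalls G σ).N a b → Sat G (σ ++ [(a, b)]) φ) := by
  simp only [Sat, ProgRel]
  exact ⟨fun h hne hN => h _ ⟨hne, hN, rfl⟩, by rintro h τ ⟨hne, hN, rfl⟩; exact h hne hN⟩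

theorem mem_pairsList [Fintype A] (c : A × A) : c ∈ pairsList A :=
  Finset.mem_toList.2 (Finset.mem_univ c)

theorem mem_distinctPairs [Fintype A] [DecidableEq A] {c : A × A} :
    c ∈ distinctPairs A ↔ c.1 ≠ c.2 := by
  simp [distinctPairs, mem_pairsList]

theorem sat_ExForm [Fintype A] : Sat G σ (ExForm A) ↔ AllExpert (doCalls G σ) := by
  simp only [ExForm, sat_listConj, List.mem_map, AllExpert]
  exact ⟨fun h a b => by simpa [Sat] using h _ ⟨(a, b), mem_pairsList _, rfl⟩,
    by rintro h _ ⟨c, -, rfl⟩; simpa [Sat] using h c.1 c.2⟩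

end Semantics

theorem progRel_foldr_cup {G : GossipGraph A} {l : List (Prog A)} {π₀ : Prog A}
    {σ τ : List (A × A)} :
    ProgRel G (l.foldr Prog.cup π₀) σ τ ↔ (∃ π ∈ l, ProgRel G π σ τ) ∨ ProgRel G π₀ σ τ := by
  induction l with
  | nil => simp
  | cons π l ih => simp [ProgRel, ih, or_assoc]

section ProtocolProgram

variable [Fintype A] [DecidableEq A] {G : GossipGraph A} {P : Protocol A}

def PermittedStep (G : GossipGraph A) (P : Protocol A) (σ τ : List (A × A)) : Prop :=
  ∃ c, Permits G P σ c ∧ τ = σ ++ [c]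

theorem progRel_protProg_iff {σ τ : List (A × A)} :
    ProgRel G (protProg A P) σ τ ↔
      Relation.ReflTransGen (PermittedStep G P) σ τ ∧ ∀ c, ¬ Permits G P τ c := by
  have hstep : ∀ σ τ, ProgRel G (((distinctPairs A).map fun c =>
      Prog.seq (Prog.test (Form.conj (Form.atomN c.1 c.2) (P c.1 c.2))) (Prog.call c.1 c.2)).foldr
        Prog.cup (Prog.test (Form.neg Form.top))) σ τ ↔ PermittedStep G P σ τ := by
    intro σ τ
    simp only [progRel_foldr_cup, List.mem_map, ProgRel, Sat, not_true, and_false, or_false]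
    constructor
    · rintro ⟨_, ⟨c, -, rfl⟩, _, ⟨rfl, hN, hP⟩, hne, -, rfl⟩
      exact ⟨c, ⟨hne, hN, hP⟩, rfl⟩
    · rintro ⟨c, ⟨hne, hN, hP⟩, rfl⟩
      exact ⟨_, ⟨c, mem_distinctPairs.2 hne, rfl⟩, σ, ⟨rfl, hN, hP⟩, hne, hN, rfl⟩
  simp only [protProg, ProgRel, hstep, sat_listConj, List.forall_mem_map, mem_distinctPairs, Sat]
  constructor
  · rintro ⟨ρ, hstar, rfl, hterm⟩
    exact ⟨hstar, fun c ⟨hne, hN, hP⟩ => hterm c hne ⟨hN, hP⟩⟩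
  · rintro ⟨hstar, hterm⟩
    exact ⟨τ, hstar, rfl, fun c hne ⟨hN, hP⟩ => hterm c ⟨hne, hN, hP⟩⟩

theorem sat_diamond_protProg_iff {σ : List (A × A)} :
    Sat G σ (Form.neg (Form.box (protProg A P) (Form.neg (ExForm A)))) ↔
      ∃ τ, Relation.ReflTransGen (PermittedStep G P) σ τ ∧ (∀ c, ¬ Permits G P τ c) ∧
        AllExpert (doCalls G τ) := by
  simp only [Sat, not_forall, not_not, exists_prop, progRel_protProg_iff, sat_ExForm, and_assoc]

end ProtocolProgram

section LookAhead

variable [Fintype A] [DecidableEq A] {G : GossipGraph A} {P : Protocol A}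
  {σ : List (A × A)} {c : A × A} {a b : A}

theorem Permits.of_softLookAhead (h : Permits G (softLookAhead P) σ c) : Permits G P σ c :=
  ⟨h.1, h.2.1, h.2.2.1⟩

theorem Permits.of_hardLookAhead (h : Permits G (hardLookAhead P) σ c) : Permits G P σ c :=
  ⟨h.1, h.2.1, h.2.2.1⟩

theorem permits_softLookAhead_iff :
    Permits G (softLookAhead P) σ (a, b) ↔ Permits G P σ (a, b) ∧
      ∃ τ, Epi G (Permits G P) a τ σ ∧ Sat G τ (Form.box (Prog.call a b)
        (Form.neg (Form.box (protProg A P) (Form.neg (ExForm A))))) := by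
  simp only [Permits, softLookAhead, Sat.eq_5, sat_hatK_iff, and_assoc]

theorem permits_hardLookAhead_iff :
    Permits G (hardLookAhead P) σ (a, b) ↔ Permits G P σ (a, b) ∧
      ∀ τ, Epi G (Permits G P) a τ σ → Sat G τ (Form.box (Prog.call a b)
        (Form.neg (Form.box (protProg A P) (Form.neg (ExForm A))))) := by
  simp only [Permits, hardLookAhead, Sat.eq_5, sat_K_iff, and_assoc]

end LookAhead

noncomputable def ignorance (G : GossipGraph A) (σ : List (A × A)) : ℕ :=
  {c : A × A | ¬ (doCalls G σ).S c.1 c.2}.ncard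

theorem ignorance_le_card [Finite A] (G : GossipGraph A) (σ : List (A × A)) :
    ignorance G σ ≤ Nat.card (A × A) :=
  Set.ncard_le_card _

theorem ignorance_append_singleton_lt [Finite A] {G : GossipGraph A} {σ : List (A × A)}
    {c : A × A} (hc : ¬ (doCalls G σ).S c.1 c.2) : ignorance G (σ ++ [c]) < ignorance G σ := by
  refine Set.ncard_lt_ncard (Set.ssubset_iff_of_subset ?_ |>.2 ⟨c, hc, ?_⟩)
  · exact fun d hd h => hd (doCalls_append_singleton G σ c ▸ Or.inl h)
  · exact fun h => h (doCalls_append_singleton G σ c ▸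
      Or.inr ⟨Or.inl rfl, Or.inr ((doCalls G σ).refl_S c.2)⟩)

def Represents (R : A → A → Prop) (f : A → A → Bool) : Prop :=
  ∀ x y, R x y ↔ f x y = true

def callTable [DecidableEq A] (f : A → A → Bool) (c : A × A) : A → A → Bool :=
  fun x y => f x y || ((x == c.1 || x == c.2) && (f c.1 y || f c.2 y))

theorem represents_doCalls [DecidableEq A] {G : GossipGraph A} {n s : A → A → Bool}
    (hN : Represents G.N n) (hS : Represents G.S s) (σ : List (A × A)) :
    Represents (doCalls G σ).N (σ.foldl callTable n) ∧
      Represents (doCalls G σ).S (σ.foldl callTable s) := by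
  induction σ generalizing G n s with
  | nil => exact ⟨hN, hS⟩
  | cons c σ ih =>
      rw [Represents] at hN hS
      exact ih (G := doCall G c) (fun x y => by simp [doCall, callTable, hN])
        (fun x y => by simp [doCall, callTable, hS])

namespace Spaceship

abbrev Call := Fin 4 × Fin 4

def agents : List (Fin 4) := [0, 1, 2, 3]

def calls : List Call := agents.flatMap fun a => (agents.filter (· != a)).map (a, ·)

theorem mem_agents : ∀ x, x ∈ agents := by decide

theorem mem_calls : ∀ c : Call, c.1 ≠ c.2 → c ∈ calls := by decide

def nTable (σ : List Call) : Fin 4 → Fin 4 → Bool :=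
  σ.foldl callTable fun x y =>
    x == y || (x == 0 && y == 1) || (x == 3 && y == 1) || (x == 1 && y == 2)

def sTable (σ : List Call) : Fin 4 → Fin 4 → Bool :=
  σ.foldl callTable fun x y => x == y

theorem represents_nTable_sTable (σ : List Call) :
    Represents (doCalls spaceship σ).N (nTable σ) ∧
      Represents (doCalls spaceship σ).S (sTable σ) :=
  represents_doCalls (by unfold Represents spaceship; decide)
    (by unfold Represents spaceship; decide) σ

theorem n_iff_nTable {σ : List Call} {x y : Fin 4} :
    (doCalls spaceship σ).N x y ↔ nTable σ x y = true :=
  (represents_nTable_sTable σ).1 x y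

theorem s_iff_sTable {σ : List Call} {x y : Fin 4} :
    (doCalls spaceship σ).S x y ↔ sTable σ x y = true :=
  (represents_nTable_sTable σ).2 x y

def sameStateB (τ σ : List Call) (b : Fin 4) : Bool :=
  agents.all fun x => nTable τ b x == nTable σ b x && sTable τ b x == sTable σ b x

theorem sameStateB_iff {τ σ : List Call} {b : Fin 4} :
    sameStateB τ σ b = true ↔ SameLocalState spaceship τ σ b := by
  simp only [sameStateB, List.all_eq_true, Bool.and_eq_true, beq_iff_eq, SameLocalState,
    n_iff_nTable, s_iff_sTable, ← Bool.eq_iff_iff]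
  exact ⟨fun h => ⟨fun x => (h x (mem_agents x)).1, fun x => (h x (mem_agents x)).2⟩,
    fun h x _ => ⟨h.1 x, h.2 x⟩⟩

def Decides (pb : List Call → Call → Bool) (P : Protocol (Fin 4)) : Prop :=
  ∀ σ c, pb σ c = true ↔ Permits spaceship P σ c

variable {pb : List Call → Call → Bool} {P : Protocol (Fin 4)}

def epiExtend (pb : List Call → Call → Bool) (a : Fin 4) (cls : List (List Call))
    (σ : List Call) (c : Call) : List (List Call) :=
  if pb σ c then
    if c.1 = a then (cls.filter fun τ => sameStateB τ σ c.2 && pb τ c).map (· ++ [c])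
    else if c.2 = a then (cls.filter fun τ => sameStateB τ σ c.1 && pb τ c).map (· ++ [c])
    else cls.flatMap fun τ => (calls.filter fun d => d.1 != a && d.2 != a && pb τ d).map (τ ++ [·])
  else []

def epiClassRev (pb : List Call → Call → Bool) (a : Fin 4) : List Call → List (List Call)
  | [] => [[]]
  | c :: σ => epiExtend pb a (epiClassRev pb a σ) σ.reverse c

def epiClass (pb : List Call → Call → Bool) (a : Fin 4) (σ : List Call) : List (List Call) :=
  epiClassRev pb a σ.reverse

theorem epiClass_append_singleton (a : Fin 4) (σ : List Call) (c : Call) :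
    epiClass pb a (σ ++ [c]) = epiExtend pb a (epiClass pb a σ) σ c := by
  simp [epiClass, epiClassRev]

theorem mem_epiExtend_iff (hpb : Decides pb P) {a : Fin 4} {cls : List (List Call)}
    {σ : List Call} (hcls : ∀ τ, τ ∈ cls ↔ Epi spaceship (Permits spaceship P) a τ σ)
    {c : Call} {ρ : List Call} :
    ρ ∈ epiExtend pb a cls σ c ↔ Epi spaceship (Permits spaceship P) a ρ (σ ++ [c]) := by
  unfold Decides at hpb
  rw [epi_append_singleton_iff, epiExtend]
  by_cases hσ : Permits spaceship P σ c
  · have hne : c.1 ≠ c.2 := hσ.1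
    simp only [(hpb σ c).2 hσ, if_true, hσ, and_true]
    split_ifs with h1 h2
    · simp only [List.mem_map, List.mem_filter, Bool.and_eq_true, hcls, sameStateB_iff, hpb]
      constructor
      · rintro ⟨τ, ⟨hepi, hsame, hτ⟩, rfl⟩
        exact ⟨τ, c, rfl, hepi, Or.inl ⟨h1, rfl, hsame, hτ⟩⟩
      · rintro ⟨τ, d, rfl, hepi, ⟨-, rfl, hsame, hτ⟩ | ⟨h2, -⟩ | ⟨h1', -⟩⟩
        · exact ⟨τ, ⟨hepi, hsame, hτ⟩, rfl⟩
        · exact absurd (h1.trans h2.symm) hne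
        · exact absurd h1 h1'
    · simp only [List.mem_map, List.mem_filter, Bool.and_eq_true, hcls, sameStateB_iff, hpb]
      constructor
      · rintro ⟨τ, ⟨hepi, hsame, hτ⟩, rfl⟩
        exact ⟨τ, c, rfl, hepi, Or.inr (Or.inl ⟨h2, rfl, hsame, hτ⟩)⟩
      · rintro ⟨τ, d, rfl, hepi, ⟨h1', -⟩ | ⟨-, rfl, hsame, hτ⟩ | ⟨-, h2', -⟩⟩
        · exact absurd h1' h1
        · exact ⟨τ, ⟨hepi, hsame, hτ⟩, rfl⟩
        · exact absurd h2 h2'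
    · simp only [List.mem_flatMap, List.mem_map, List.mem_filter, Bool.and_eq_true, hcls, hpb,
        bne_iff_ne, ne_eq]
      constructor
      · rintro ⟨τ, hepi, d, ⟨-, ⟨hd1, hd2⟩, hτ⟩, rfl⟩
        exact ⟨τ, d, rfl, hepi, Or.inr (Or.inr ⟨h1, h2, hd1, hd2, hτ⟩)⟩
      · rintro ⟨τ, d, rfl, hepi, ⟨h1', -⟩ | ⟨h2', -⟩ | ⟨-, -, hd1, hd2, hτ⟩⟩
        · exact absurd h1' h1
        · exact absurd h2' h2
        · exact ⟨τ, hepi, d, ⟨mem_calls d hτ.1, ⟨hd1, hd2⟩, hτ⟩, rfl⟩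
  · have hσb : pb σ c = false := Bool.eq_false_iff.2 fun h => hσ ((hpb σ c).1 h)
    simp [hσb, hσ]

theorem mem_epiClass_iff (hpb : Decides pb P) (a : Fin 4) (σ : List Call) :
    ∀ τ, τ ∈ epiClass pb a σ ↔ Epi spaceship (Permits spaceship P) a τ σ := by
  induction σ using List.reverseRecOn with
  | nil => simp [epiClass, epiClassRev, epi_nil_iff]
  | append_singleton σ c ih =>
      intro τ
      rw [epiClass_append_singleton, mem_epiExtend_iff hpb ih]

def terminalB (pb : List Call → Call → Bool) (σ : List Call) : Bool :=
  calls.all fun c => !pb σ c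

def expertsB (σ : List Call) : Bool :=
  agents.all fun a => agents.all fun b => sTable σ a b

theorem terminalB_iff (hpb : Decides pb P) {σ : List Call} :
    terminalB pb σ = true ↔ ∀ c, ¬ Permits spaceship P σ c := by
  simp only [terminalB, List.all_eq_true, Bool.not_eq_eq_eq_not, Bool.not_true,
    Bool.eq_false_iff, ne_eq, hpb σ]
  exact ⟨fun h c hc => h c (mem_calls c hc.1) hc, fun h c _ => h c⟩

theorem expertsB_iff {σ : List Call} : expertsB σ = true ↔ AllExpert (doCalls spaceship σ) := by
  simp only [expertsB, List.all_eq_true, AllExpert, s_iff_sTable]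
  exact ⟨fun h a b => h a (mem_agents a) b (mem_agents b), fun h a _ b _ => h a b⟩

def successB (pb : List Call → Call → Bool) : ℕ → List Call → Bool
  | 0, _ => false
  | n + 1, σ => (terminalB pb σ && expertsB σ) ||
      calls.any fun c => pb σ c && successB pb n (σ ++ [c])

theorem successB_iff (hpb : Decides pb P)
    (hnew : ∀ σ c, Permits spaceship P σ c → ¬ (doCalls spaceship σ).S c.1 c.2) :
    ∀ (n : ℕ) (σ : List Call), ignorance spaceship σ < n →
      (successB pb n σ = true ↔ ∃ τ, Relation.ReflTransGen (PermittedStep spaceship P) σ τ ∧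
        (∀ c, ¬ Permits spaceship P τ c) ∧ AllExpert (doCalls spaceship τ)) := by
  intro n
  induction n with
  | zero => intro σ h; omega
  | succ n ih =>
      intro σ hσ
      have ih' : ∀ c, Permits spaceship P σ c → (successB pb n (σ ++ [c]) = true ↔ _) :=
        fun c hc => ih (σ ++ [c]) ((ignorance_append_singleton_lt (hnew σ c hc)).trans_le
          (Nat.lt_succ_iff.1 hσ))
      simp only [successB, Bool.or_eq_true, Bool.and_eq_true, terminalB_iff hpb, expertsB_iff,
        List.any_eq_true]
      constructor
      · rintro (⟨hterm, hex⟩ | ⟨c, -, hc, hsucc⟩)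
        · exact ⟨σ, .refl, hterm, hex⟩
        · obtain ⟨τ, hrun, hτ⟩ := (ih' c ((hpb σ c).1 hc)).1 hsucc
          exact ⟨τ, .head ⟨c, (hpb σ c).1 hc, rfl⟩ hrun, hτ⟩
      · rintro ⟨τ, hrun, hτ⟩
        obtain rfl | ⟨_, ⟨c, hc, rfl⟩, hrun⟩ := hrun.cases_head
        · exact Or.inl hτ
        · exact Or.inr ⟨c, mem_calls c hc.1, (hpb σ c).2 hc, (ih' c hc).2 ⟨τ, hrun, hτ⟩⟩

-- The fuel exceeds `Nat.card (Fin 4 × Fin 4)`, which bounds the length of every run.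
def lookAheadB (pb : List Call → Call → Bool) (a b : Fin 4) (τ : List Call) : Bool :=
  !nTable τ a b || successB pb 17 (τ ++ [(a, b)])

theorem lookAheadB_iff (hpb : Decides pb P)
    (hnew : ∀ σ c, Permits spaceship P σ c → ¬ (doCalls spaceship σ).S c.1 c.2)
    {a b : Fin 4} (hab : a ≠ b) {τ : List Call} :
    lookAheadB pb a b τ = true ↔ Sat spaceship τ (Form.box (Prog.call a b)
      (Form.neg (Form.box (protProg (Fin 4) P) (Form.neg (ExForm (Fin 4)))))) := by
  have hfuel : ignorance spaceship (τ ++ [(a, b)]) < 17 :=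
    (ignorance_le_card _ _).trans_lt (by simp)
  rw [sat_box_call_iff, sat_diamond_protProg_iff, ← successB_iff hpb hnew 17 _ hfuel,
    lookAheadB, Bool.or_eq_true, Bool.not_eq_eq_eq_not, Bool.not_true, Bool.eq_false_iff, ne_eq,
    ← n_iff_nTable]
  tauto

def lnsB (σ : List Call) (c : Call) : Bool :=
  c.1 != c.2 && nTable σ c.1 c.2 && !sTable σ c.1 c.2

def softB (pb : List Call → Call → Bool) (σ : List Call) (c : Call) : Bool :=
  pb σ c && (epiClass pb c.1 σ).any (lookAheadB pb c.1 c.2)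

def hardB (pb : List Call → Call → Bool) (σ : List Call) (c : Call) : Bool :=
  pb σ c && (epiClass pb c.1 σ).all (lookAheadB pb c.1 c.2)

theorem decides_lnsB : Decides lnsB (LNSsyn (Fin 4)) := by
  intro σ c
  simp [lnsB, Permits, LNSsyn, Sat, n_iff_nTable, s_iff_sTable, and_assoc]

theorem decides_softB (hpb : Decides pb P)
    (hnew : ∀ σ c, Permits spaceship P σ c → ¬ (doCalls spaceship σ).S c.1 c.2) :
    Decides (softB pb) (softLookAhead P) := by
  rintro σ ⟨a, b⟩
  rw [permits_softLookAhead_iff, softB, Bool.and_eq_true, hpb, List.any_eq_true]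
  refine and_congr_right fun hab => ?_
  simp only [mem_epiClass_iff hpb, lookAheadB_iff hpb hnew hab.1]

theorem decides_hardB (hpb : Decides pb P)
    (hnew : ∀ σ c, Permits spaceship P σ c → ¬ (doCalls spaceship σ).S c.1 c.2) :
    Decides (hardB pb) (hardLookAhead P) := by
  rintro σ ⟨a, b⟩
  rw [permits_hardLookAhead_iff, hardB, Bool.and_eq_true, hpb, List.all_eq_true]
  refine and_congr_right fun hab => ?_
  simp only [mem_epiClass_iff hpb, lookAheadB_iff hpb hnew hab.1]

theorem decides_softB_lnsB : Decides (softB lnsB) (softLookAhead (LNSsyn (Fin 4))) :=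
  decides_softB decides_lnsB fun _ _ => Permits.not_knows_of_LNS

theorem decides_hardB_softB_lnsB :
    Decides (hardB (softB lnsB)) (hardLookAhead (softLookAhead (LNSsyn (Fin 4)))) :=
  decides_hardB decides_softB_lnsB fun _ _ hc => hc.of_softLookAhead.not_knows_of_LNS

theorem decides_hardB_lnsB : Decides (hardB lnsB) (hardLookAhead (LNSsyn (Fin 4))) :=
  decides_hardB decides_lnsB fun _ _ => Permits.not_knows_of_LNS

def layers (pb : List Call → Call → Bool) : ℕ → List (List Call)
  | 0 => [[]]
  | n + 1 => (layers pb n).flatMap fun σ => (calls.filter (pb σ)).map (σ ++ [·])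

theorem mem_layers_iff (hpb : Decides pb P) {n : ℕ} {σ : List Call} :
    σ ∈ layers pb n ↔ σ ∈ extension P spaceship ∧ σ.length = n := by
  induction n generalizing σ with
  | zero => simpa [layers, List.length_eq_zero_iff] using fun h => h ▸ Ext.nil
  | succ n ih =>
      simp only [layers, List.mem_flatMap, List.mem_map, List.mem_filter, ih]
      constructor
      · rintro ⟨τ, ⟨hτ, rfl⟩, c, ⟨-, hc⟩, rfl⟩
        exact ⟨Ext.snoc hτ ((hpb τ c).1 hc), by simp⟩
      · rintro ⟨hσ, hlen⟩
        obtain rfl | ⟨τ, c, rfl⟩ := σ.eq_nil_or_concat'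
        · simp at hlen
        · obtain ⟨hτ, hc⟩ := ext_append_singleton_iff.1 hσ
          exact ⟨τ, ⟨hτ, by simpa using hlen⟩, c, ⟨mem_calls c hc.1, (hpb τ c).2 hc⟩, rfl⟩

theorem layers_eq_nil_of_le {k n : ℕ} (hk : layers pb k = []) (hkn : k ≤ n) :
    layers pb n = [] := by
  induction n, hkn using Nat.le_induction with
  | base => exact hk
  | succ n _ ih => simp [layers, ih]

theorem forall_mem_extension_of_layers (hpb : Decides pb P) {k : ℕ} (hk : layers pb k = [])
    {p : List Call → Prop} (hp : ∀ n < k, ∀ σ ∈ layers pb n, p σ) :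
    ∀ σ ∈ extension P spaceship, p σ := by
  intro σ hσ
  have hmem : σ ∈ layers pb σ.length := mem_layers_iff hpb |>.2 ⟨hσ, rfl⟩
  by_cases hlen : σ.length < k
  · exact hp _ hlen σ hmem
  · simp [layers_eq_nil_of_le hk (not_lt.1 hlen)] at hmem

theorem layers_hardB_lnsB_two : layers (hardB lnsB) 2 = [] := by decide

theorem layers_softB_lnsB_six : layers (softB lnsB) 6 = [] := by decide

theorem softB_lnsB_terminal_expert :
    ∀ n < 6, ∀ σ ∈ layers (softB lnsB) n, terminalB (softB lnsB) σ = true → expertsB σ = true := by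
  decide

theorem softB_lnsB_imp_hardB :
    ∀ n < 6, ∀ σ ∈ layers (softB lnsB) n, ∀ c : Call,
      softB lnsB σ c = true → hardB (softB lnsB) σ c = true := by
  decide

theorem mem_layers_softB_lnsB_five :
    [((0 : Fin 4), (1 : Fin 4)), (3, 1), (1, 2), (0, 2), (3, 2)] ∈ layers (softB lnsB) 5 := by
  decide

theorem stronglySuccessfulOn_softLookAhead_LNS :
    StronglySuccessfulOn (extension (softLookAhead (LNSsyn (Fin 4)))) spaceship := by
  intro σ hσ hterm
  refine expertsB_iff.1 <| forall_mem_extension_of_layers decides_softB_lnsB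
    layers_softB_lnsB_six (p := fun σ => terminalB (softB lnsB) σ = true → expertsB σ = true)
    softB_lnsB_terminal_expert σ hσ ?_
  exact (terminalB_iff decides_softB_lnsB).2 (not_permits_of_terminalIn hσ hterm)

theorem extension_hardLookAhead_softLookAhead_LNS :
    extension (hardLookAhead (softLookAhead (LNSsyn (Fin 4)))) spaceship =
      extension (softLookAhead (LNSsyn (Fin 4))) spaceship := by
  refine extension_eq_of_permits (fun _ _ => Permits.of_hardLookAhead) fun σ hσ c hc => ?_
  refine (decides_hardB_softB_lnsB σ c).1 <| forall_mem_extension_of_layers decides_softB_lnsB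
    layers_softB_lnsB_six (p := fun σ => ∀ c, softB lnsB σ c = true → hardB (softB lnsB) σ c = true)
    softB_lnsB_imp_hardB σ hσ c ((decides_softB_lnsB σ c).2 hc)

theorem length_le_one_of_mem_extension_hardLookAhead_LNS :
    ∀ σ ∈ extension (hardLookAhead (LNSsyn (Fin 4))) spaceship, σ.length ≤ 1 :=
  forall_mem_extension_of_layers decides_hardB_lnsB layers_hardB_lnsB_two
    fun _ hn _ hσ => (mem_layers_iff decides_hardB_lnsB).1 hσ |>.2 ▸ Nat.lt_succ_iff.1 hn

theorem mem_extension_softLookAhead_LNS :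
    [((0 : Fin 4), (1 : Fin 4)), (3, 1), (1, 2), (0, 2), (3, 2)] ∈
      extension (softLookAhead (LNSsyn (Fin 4))) spaceship :=
  ((mem_layers_iff decides_softB_lnsB).1 mem_layers_softB_lnsB_five).1

end Spaceship

/-- Hard look-ahead strengthening is not monotone: on the spaceship graph, with
`Q = LNS^♦ ⊆ P = LNS`, we have `Q^■(G) = Q(G)` (as `Q` is strongly successful on `G`)
while `P^■(G)` contains no sequence of length greater than one; in particular
`01;31;12;02;32 ∈ Q^■(G) \ P^■(G)`. -/
theorem hard_lookahead_not_monotone :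
    Initial spaceship ∧
    (∀ G : GossipGraph (Fin 4), Initial G →
      extension (softLookAhead (LNSsyn (Fin 4))) G ⊆ extension (LNSsyn (Fin 4)) G) ∧
    StronglySuccessfulOn (extension (softLookAhead (LNSsyn (Fin 4)))) spaceship ∧
    extension (hardLookAhead (softLookAhead (LNSsyn (Fin 4)))) spaceship =
      extension (softLookAhead (LNSsyn (Fin 4))) spaceship ∧
    (∀ σ ∈ extension (hardLookAhead (LNSsyn (Fin 4))) spaceship, σ.length ≤ 1) ∧
    ([((0 : Fin 4), (1 : Fin 4)), (3, 1), (1, 2), (0, 2), (3, 2)] ∈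
      extension (hardLookAhead (softLookAhead (LNSsyn (Fin 4)))) spaceship) ∧
    ([((0 : Fin 4), (1 : Fin 4)), (3, 1), (1, 2), (0, 2), (3, 2)] ∉
      extension (hardLookAhead (LNSsyn (Fin 4))) spaceship) ∧
    ¬ (extension (hardLookAhead (softLookAhead (LNSsyn (Fin 4)))) spaceship ⊆
        extension (hardLookAhead (LNSsyn (Fin 4))) spaceship) := by
  have hmem : [((0 : Fin 4), (1 : Fin 4)), (3, 1), (1, 2), (0, 2), (3, 2)] ∈
      extension (hardLookAhead (softLookAhead (LNSsyn (Fin 4)))) spaceship :=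
    Spaceship.extension_hardLookAhead_softLookAhead_LNS ▸ Spaceship.mem_extension_softLookAhead_LNS
  have hnot : [((0 : Fin 4), (1 : Fin 4)), (3, 1), (1, 2), (0, 2), (3, 2)] ∉
      extension (hardLookAhead (LNSsyn (Fin 4))) spaceship := fun h =>
    absurd (Spaceship.length_le_one_of_mem_extension_hardLookAhead_LNS _ h) (by decide)
  exact ⟨fun _ _ => Iff.rfl, fun _ _ => extension_mono fun _ _ => Permits.of_softLookAhead,
    Spaceship.stronglySuccessfulOn_softLookAhead_LNS,
    Spaceship.extension_hardLookAhead_softLookAhead_LNS,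
    Spaceship.length_le_one_of_mem_extension_hardLookAhead_LNS, hmem, hnot,
    fun hsub => hnot (hsub hmem)⟩

end Gossip
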